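/- arXiv:1708.04953 — 3 statements merged into one kernel-verified Lean document; each statement's English description precedes it below -/
import Mathlib

section
/- In a time-oriented Lorentzian manifold, any subset A ⊆ M that is either future compact or past compact is closed in M. -/
/-!
STATEMENT 3: In a time-oriented Lorentzian manifold (encoded abstractly as a causal
space with the standard properties), any subset that is either future compact or past
compact is closed.
-/

structure CausalSpace (M : Type*) [TopologicalSpace M] where
  chron : M → M → Prop
  causal : M → M → Prop
  causal_refl : ∀ p, causal p p
  causal_trans : ∀ {p q r}, causal p q → causal q r → causal p r
  chron_imp_causal : ∀ {p q}, chron p q → causal p q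
  pushup_left : ∀ {p q r}, chron p q → causal q r → chron p r
  pushup_right : ∀ {p q r}, causal p q → chron q r → chron p r
  chron_open : IsOpen {x : M × M | chron x.1 x.2}
  mem_closure_future : ∀ p : M, p ∈ closure {q | chron p q}
  mem_closure_past : ∀ p : M, p ∈ closure {q | chron q p}

namespace CausalSpace

variable {M : Type*} [TopologicalSpace M] (C : CausalSpace M)

def causalFuture (A : Set M) : Set M := {q | ∃ p ∈ A, C.causal p q}

def causalPast (A : Set M) : Set M := {q | ∃ p ∈ A, C.causal q p}

def FutureCompact (A : Set M) : Prop := ∀ p : M, IsCompact (C.causalFuture {p} ∩ A)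

def PastCompact (A : Set M) : Prop := ∀ p : M, IsCompact (C.causalPast {p} ∩ A)

end CausalSpace


private lemma futureCompact_isClosed
    {M : Type*} [TopologicalSpace M] [T2Space M] (C : CausalSpace M) (A : Set M)
    (hA : C.FutureCompact A) : IsClosed A := by
  apply isClosed_of_closure_subset
  intro x hx
  obtain ⟨q, hq⟩ : ∃ q, C.chron q x := by
    rcases mem_closure_iff.mp (C.mem_closure_past x) Set.univ isOpen_univ (Set.mem_univ x)
      with ⟨y, _, hy⟩
    exact ⟨y, hy⟩
  have hopen : IsOpen {y : M | C.chron q y} := by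
    have he : {y : M | C.chron q y} = (fun y => ((q, y) : M × M)) ⁻¹' {x : M × M | C.chron x.1 x.2} := rfl
    rw [he]
    exact C.chron_open.preimage (Continuous.prodMk_right q)
  have hK : IsCompact (C.causalFuture {q} ∩ A) := hA q
  have hxK : x ∈ closure (C.causalFuture {q} ∩ A) := by
    rw [mem_closure_iff] at hx ⊢
    intro U hU hxU
    rcases hx (U ∩ {y | C.chron q y}) (hU.inter hopen) ⟨hxU, hq⟩ with ⟨y, ⟨hyU, hyc⟩, hyA⟩
    exact ⟨y, hyU, ⟨q, rfl, C.chron_imp_causal hyc⟩, hyA⟩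
  exact (hK.isClosed.closure_subset hxK).2

private def CausalSpace.dual {M : Type*} [TopologicalSpace M] (C : CausalSpace M) :
    CausalSpace M where
  chron p q := C.chron q p
  causal p q := C.causal q p
  causal_refl p := C.causal_refl p
  causal_trans h1 h2 := C.causal_trans h2 h1
  chron_imp_causal h := C.chron_imp_causal h
  pushup_left h1 h2 := C.pushup_right h2 h1
  pushup_right h1 h2 := C.pushup_left h2 h1
  chron_open := by
    have he : {x : M × M | C.chron x.2 x.1} =
        Prod.swap ⁻¹' {x : M × M | C.chron x.1 x.2} := rfl
    rw [he]
    exact C.chron_open.preimage continuous_swap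
  mem_closure_future p := C.mem_closure_past p
  mem_closure_past p := C.mem_closure_future p

/-- Any future compact or past compact subset of a time-oriented Lorentzian
manifold is closed. -/
theorem isClosed_of_futureCompact_or_pastCompact
    {M : Type*} [TopologicalSpace M] [T2Space M] (C : CausalSpace M) (A : Set M)
    (h : C.FutureCompact A ∨ C.PastCompact A) : IsClosed A := by
  rcases h with h | h
  · exact futureCompact_isClosed C A h
  · exact futureCompact_isClosed C.dual A h
end

section
/- Let M be a globally hyperbolic Lorentzian manifold. If A ⊆ M is past compact, then J⁺(A) is closed, J⁺(A) equals the closure of I⁺(A), and J⁺(A) is itself past compact. The time-reversed statement holds for future compact A and J⁻(A). -/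
namespace CausalSpace

variable {M : Type*} [TopologicalSpace M] (C : CausalSpace M)

def chronFuture (A : Set M) : Set M := {q | ∃ p ∈ A, C.chron p q}

def chronPast (A : Set M) : Set M := {q | ∃ p ∈ A, C.chron q p}

/-- Global hyperbolicity: no closed causal curves (causal antisymmetry) together
with compactness of all causal diamonds `J⁺(p) ∩ J⁻(q)`. -/
def GloballyHyperbolic : Prop :=
  (∀ p q, C.causal p q → C.causal q p → p = q) ∧
  ∀ p q : M, IsCompact (C.causalFuture {p} ∩ C.causalPast {q})

end CausalSpace

namespace CausalSpace

variable {M : Type*} [TopologicalSpace M] (C : CausalSpace M)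

/-- The time-reversed causal space. -/
def rev : CausalSpace M where
  chron p q := C.chron q p
  causal p q := C.causal q p
  causal_refl p := C.causal_refl p
  causal_trans h1 h2 := C.causal_trans h2 h1
  chron_imp_causal h := C.chron_imp_causal h
  pushup_left h1 h2 := C.pushup_right h2 h1
  pushup_right h1 h2 := C.pushup_left h2 h1
  chron_open := by
    have h : {x : M × M | C.chron x.2 x.1} = Prod.swap ⁻¹' {x : M × M | C.chron x.1 x.2} := rfl
    rw [h]; exact C.chron_open.preimage continuous_swap
  mem_closure_future := C.mem_closure_past
  mem_closure_past := C.mem_closure_future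

variable {C}

lemma rev_gh (hgh : C.GloballyHyperbolic) : C.rev.GloballyHyperbolic := by
  refine ⟨fun p q h1 h2 => (hgh.1 q p h1 h2).symm, fun p q => ?_⟩
  have h : C.rev.causalFuture {p} ∩ C.rev.causalPast {q}
      = C.causalFuture {q} ∩ C.causalPast {p} := by
    ext y; exact ⟨fun h => ⟨h.2, h.1⟩, fun h => ⟨h.2, h.1⟩⟩
  rw [h]; exact hgh.2 q p

lemma exists_chron_lt (p : M) : ∃ a, C.chron a p := by
  have h := C.mem_closure_past p
  by_contra hno
  push_neg at hno
  have he : {q | C.chron q p} = (∅ : Set M) := Set.eq_empty_iff_forall_notMem.2 hno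
  rw [he, closure_empty] at h
  exact h

lemma exists_chron_gt (p : M) : ∃ b, C.chron p b := by
  have h := C.mem_closure_future p
  by_contra hno
  push_neg at hno
  have he : {q | C.chron p q} = (∅ : Set M) := Set.eq_empty_iff_forall_notMem.2 hno
  rw [he, closure_empty] at h
  exact h

lemma isOpen_chronFuture_pt (a : M) : IsOpen {y | C.chron a y} :=
  C.chron_open.preimage (Continuous.prodMk_right a)

lemma isOpen_chronPast_pt (b : M) : IsOpen {y | C.chron y b} :=
  C.chron_open.preimage (Continuous.prodMk_left b)

variable [T2Space M]

/-- `J⁻(q)` is closed, given compact causal diamonds. -/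
lemma isClosed_causalPast_singleton (hgh : C.GloballyHyperbolic) (q : M) :
    IsClosed (C.causalPast {q}) := by
  apply isClosed_of_closure_subset
  intro x hx
  obtain ⟨a, ha⟩ := exists_chron_lt (C := C) x
  have hxU : x ∈ {y | C.chron a y} := ha
  have h1 : x ∈ closure ({y | C.chron a y} ∩ C.causalPast {q}) :=
    (isOpen_chronFuture_pt a).inter_closure ⟨hxU, hx⟩
  have h2 : {y | C.chron a y} ∩ C.causalPast {q}
      ⊆ C.causalFuture {a} ∩ C.causalPast {q} := by
    rintro y ⟨hy, hyq⟩
    exact ⟨⟨a, rfl, C.chron_imp_causal hy⟩, hyq⟩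
  have hK : IsClosed (C.causalFuture {a} ∩ C.causalPast {q}) := (hgh.2 a q).isClosed
  have := (closure_mono h2).trans hK.closure_subset h1
  exact this.2

/-- `J⁺(p)` is closed, given compact causal diamonds. -/
lemma isClosed_causalFuture_singleton (hgh : C.GloballyHyperbolic) (p : M) :
    IsClosed (C.causalFuture {p}) :=
  isClosed_causalPast_singleton (rev_gh hgh) p

/-- If every chronological successor of `q` is a causal successor of `p`,
then `p ≤ q`. -/
lemma causal_of_forall (hgh : C.GloballyHyperbolic) {p q : M}
    (h : ∀ b, C.chron q b → C.causal p b) : C.causal p q := by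
  have h1 : {b | C.chron q b} ⊆ C.causalFuture {p} := fun b hb => ⟨p, rfl, h b hb⟩
  have h2 : q ∈ closure (C.causalFuture {p}) := closure_mono h1 (C.mem_closure_future q)
  obtain ⟨p', hp', hc⟩ := (isClosed_causalFuture_singleton hgh p).closure_subset h2
  cases hp'
  exact hc

/-- The causal relation is closed. -/
lemma isClosed_causal_rel (hgh : C.GloballyHyperbolic) :
    IsClosed {x : M × M | C.causal x.1 x.2} := by
  apply isClosed_of_closure_subset
  rintro ⟨p, q⟩ hpq
  refine causal_of_forall hgh (fun b hb => ?_)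
  have hV : IsOpen ((Set.univ : Set M) ×ˢ {y | C.chron y b}) :=
    isOpen_univ.prod (isOpen_chronPast_pt b)
  have hmem : (p, q) ∈ (Set.univ : Set M) ×ˢ {y | C.chron y b} := ⟨trivial, hb⟩
  have h1 : (p, q) ∈ closure (((Set.univ : Set M) ×ˢ {y | C.chron y b})
      ∩ {x : M × M | C.causal x.1 x.2}) := hV.inter_closure ⟨hmem, hpq⟩
  have h2 : ((Set.univ : Set M) ×ˢ {y | C.chron y b}) ∩ {x : M × M | C.causal x.1 x.2}
      ⊆ (C.causalPast {b}) ×ˢ (Set.univ : Set M) := by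
    rintro ⟨x, y⟩ ⟨⟨-, hy⟩, hxy⟩
    exact ⟨⟨b, rfl, C.causal_trans hxy (C.chron_imp_causal hy)⟩, trivial⟩
  have hcl : IsClosed ((C.causalPast {b}) ×ˢ (Set.univ : Set M)) :=
    (isClosed_causalPast_singleton hgh b).prod isClosed_univ
  have := (closure_mono h2).trans hcl.closure_subset h1
  obtain ⟨b', hb', hc⟩ := this.1
  cases hb'
  exact hc

/-- `J⁺(K)` is closed for `K` compact. -/
lemma isClosed_causalFuture_of_isCompact (hgh : C.GloballyHyperbolic) {K : Set M}
    (hK : IsCompact K) : IsClosed (C.causalFuture K) := by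
  apply isClosed_of_closure_subset
  intro x hx
  obtain ⟨U, hUm, hUx⟩ := mem_closure_iff_ultrafilter.1 hx
  classical
  have hg : ∀ y : M, y ∈ C.causalFuture K → ∃ p, p ∈ K ∧ C.causal p y := by
    rintro y ⟨p, hp, hc⟩; exact ⟨p, hp, hc⟩
  choose! g hgK hgc using hg
  have hKmem : K ∈ U.map g :=
    Ultrafilter.mem_map.2 (U.sets_of_superset hUm (fun y hy => hgK y hy))
  obtain ⟨p, hpK, hpl⟩ := hK.ultrafilter_le_nhds (U.map g) (Filter.le_principal_iff.2 hKmem)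
  have htend : Filter.Tendsto (fun y => (g y, y)) (U : Filter M) (nhds (p, x)) :=
    Filter.Tendsto.prodMk_nhds hpl hUx
  have hSmem : {x : M × M | C.causal x.1 x.2} ∈ U.map (fun y => (g y, y)) :=
    Ultrafilter.mem_map.2 (U.sets_of_superset hUm (fun y hy => hgc y hy))
  have hmemcl : (p, x) ∈ closure {x : M × M | C.causal x.1 x.2} :=
    mem_closure_iff_ultrafilter.2 ⟨U.map (fun y => (g y, y)), hSmem, htend⟩
  have hpx : C.causal p x := (isClosed_causal_rel hgh).closure_subset hmemcl
  exact ⟨p, hpK, hpx⟩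

/-- Main lemma: everything about `J⁺(A)` for `A` past compact. -/
lemma main_lemma (hgh : C.GloballyHyperbolic) (A : Set M) (hA : C.PastCompact A) :
    IsClosed (C.causalFuture A) ∧ C.causalFuture A = closure (C.chronFuture A) ∧
      C.PastCompact (C.causalFuture A) := by
  classical
  have hclosed : IsClosed (C.causalFuture A) := by
    apply isClosed_of_closure_subset
    intro x hx
    obtain ⟨b, hb⟩ := exists_chron_gt (C := C) x
    have h1 : x ∈ closure ({y | C.chron y b} ∩ C.causalFuture A) :=
      (isOpen_chronPast_pt b).inter_closure ⟨hb, hx⟩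
    have h2 : {y | C.chron y b} ∩ C.causalFuture A
        ⊆ C.causalFuture (C.causalPast {b} ∩ A) := by
      rintro y ⟨hyb, p, hpA, hpy⟩
      exact ⟨p, ⟨⟨b, rfl, C.causal_trans hpy (C.chron_imp_causal hyb)⟩, hpA⟩, hpy⟩
    have hKc : IsClosed (C.causalFuture (C.causalPast {b} ∩ A)) :=
      isClosed_causalFuture_of_isCompact hgh (hA b)
    have h3 := (closure_mono h2).trans hKc.closure_subset h1
    obtain ⟨p, ⟨-, hpA⟩, hpx⟩ := h3
    exact ⟨p, hpA, hpx⟩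
  refine ⟨hclosed, ?_, ?_⟩
  · apply Set.Subset.antisymm
    · rintro x ⟨p, hpA, hpx⟩
      have hsub : {b | C.chron x b} ⊆ C.chronFuture A := fun b hb =>
        ⟨p, hpA, C.pushup_right hpx hb⟩
      exact closure_mono hsub (C.mem_closure_future x)
    · have hsub : C.chronFuture A ⊆ C.causalFuture A := by
        rintro y ⟨p, hpA, hp⟩; exact ⟨p, hpA, C.chron_imp_causal hp⟩
      exact (closure_mono hsub).trans hclosed.closure_subset
  · intro q
    -- the set to show compact
    set S := C.causalPast {q} ∩ C.causalFuture A with hS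
    have hScl : IsClosed S := (isClosed_causalPast_singleton hgh q).inter hclosed
    set K := C.causalPast {q} ∩ A with hKdef
    have hKcomp : IsCompact K := hA q
    -- choose a chronological past point for every point
    have hch : ∀ p : M, ∃ a, C.chron a p := fun p => exists_chron_lt p
    choose a hachron using hch
    -- open cover of K
    have hcover : K ⊆ ⋃ p : M, {y | C.chron (a p) y} := by
      intro p hp
      exact Set.mem_iUnion.2 ⟨p, hachron p⟩
    obtain ⟨t, ht⟩ := hKcomp.elim_finite_subcover (fun p => {y | C.chron (a p) y})
      (fun p => isOpen_chronFuture_pt (a p)) hcover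
    have hBcomp : IsCompact (⋃ p ∈ t, (C.causalFuture {a p} ∩ C.causalPast {q})) :=
      t.finite_toSet.isCompact_biUnion (fun p _ => hgh.2 (a p) q)
    refine IsCompact.of_isClosed_subset hBcomp hScl ?_
    rintro y ⟨⟨q', hq', hyq⟩, p, hpA, hpy⟩
    cases hq'
    have hpK : p ∈ K := ⟨⟨q, rfl, C.causal_trans hpy hyq⟩, hpA⟩
    obtain ⟨p', hp't, hp'⟩ := Set.mem_iUnion₂.1 (ht hpK)
    exact Set.mem_biUnion hp't
      ⟨⟨a p', rfl, C.causal_trans (C.chron_imp_causal hp') hpy⟩, ⟨q, rfl, hyq⟩⟩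

/-- Helper: the reversed statements translate back. -/
lemma main_lemma_rev (hgh : C.GloballyHyperbolic) (A : Set M) (hA : C.FutureCompact A) :
    IsClosed (C.causalPast A) ∧ C.causalPast A = closure (C.chronPast A) ∧
      C.FutureCompact (C.causalPast A) :=
  main_lemma (rev_gh hgh) A hA

end CausalSpace

/-- In a globally hyperbolic Lorentzian manifold: if `A` is past compact then
`J⁺(A)` is closed, equals `closure (I⁺(A))`, and is past compact; and the
time-reversed statement. -/
theorem causalFuture_of_pastCompact
    {M : Type*} [TopologicalSpace M] [T2Space M] (C : CausalSpace M)
    (hgh : C.GloballyHyperbolic) :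
    (∀ A : Set M, C.PastCompact A →
      IsClosed (C.causalFuture A) ∧ C.causalFuture A = closure (C.chronFuture A) ∧
        C.PastCompact (C.causalFuture A)) ∧
    (∀ A : Set M, C.FutureCompact A →
      IsClosed (C.causalPast A) ∧ C.causalPast A = closure (C.chronPast A) ∧
        C.FutureCompact (C.causalPast A)) :=
  ⟨fun A hA => CausalSpace.main_lemma hgh A hA,
   fun A hA => CausalSpace.main_lemma_rev hgh A hA⟩
end

section
/- (Classical divergence theorem for densities.) Let M be a smooth manifold, μ a C¹ density on M, Υ a compactly supported C¹ vector field, D a domain with regular boundary in M, and n any field of conormals to ∂D. Then ∫_D £_Υ μ = ∫_{∂D} sgn_D(n) · n(Υ) · ι_n μ, where sgn_D(n)(x) = +1 if n(x) is outward pointing relative to D and −1 if inward pointing. If μ is nowhere vanishing the left-hand side equals ∫_D (div_μ Υ) μ. -/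
/-!
STATEMENT 19 (Classical divergence theorem for densities): Let `M` be a smooth
manifold, `μ` a `C¹` density, `Υ` a compactly supported `C¹` vector field, `D` a
domain with regular boundary and `n` any field of conormals to `∂D`.  Then
`∫_D £_Υ μ = ∫_{∂D} sgn_D(n) · n(Υ) · ι_n μ`, and if `μ` is nowhere vanishing the
left-hand side equals `∫_D (div_μ Υ) μ`.

Formalized in the half-space chart (to which the statement reduces by the definition
of a domain with regular boundary): `M = E' × ℝ` with `E' = ℝ^d`,
`D = {x | x.2 ≤ 0}`, `∂D = E' × {0}`.  The density is `μ = ρ |dx|`, so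
`£_Υ μ = div (ρ Υ) |dx| = trace (D(ρ Υ)) |dx|`; a density on tangent tuples is
`μ_p(v₁,…,v_{d+1}) = ρ(p)·|det(v₁,…,v_{d+1})|`, and for a transverse vector `Θ`
with `n(Θ) = 1`, `(ι_n μ)(w₁,…,w_d) = μ(w₁,…,w_d,Θ)`; the boundary integral is
computed by evaluating `ι_n μ` on the standard basis of `E' = T(∂D)`.
-/

open MeasureTheory Set

variable {d : ℕ}

local notation "E'" => EuclideanSpace ℝ (Fin d)

/-- Coordinates on `E' × ℝ`. -/
noncomputable def prodCoord (v : EuclideanSpace ℝ (Fin d) × ℝ) : Fin (d + 1) → ℝ :=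
  Fin.snoc (fun i => v.1 i) v.2

/-- The determinant of a `(d+1)`-tuple of vectors of `E' × ℝ`. -/
noncomputable def detTuple (v : Fin (d + 1) → EuclideanSpace ℝ (Fin d) × ℝ) : ℝ :=
  (Matrix.of fun i j => prodCoord (v j) i).det

/-
In the chart `£_Υ μ = div(ρΥ) |dx|`. Split the trace of `D(ρΥ)` into its `E'`-block
and its `ℝ`-entry. Integrating the `E'`-block first over `E'` (Fubini) gives the integral of the
divergence of a compactly supported field, which vanishes; integrating the `ℝ`-entry first over
`t ≤ 0` gives `(ρΥ)(y, 0).2` by the fundamental theorem of calculus. On the boundary a conormal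
is `n = c dt` with `c = n(0, 1)`; then `n(Θ) = 1` forces `Θ.2 = c⁻¹`, so `ι_n μ = ρ / |c|` and
`sgn(n) n(Υ) ι_n μ = sgn(c) c Υ.2 ρ / |c| = ρ Υ.2`: this is `ε_Υ ι_Υ μ = sgn_D(n) n(Υ) ι_n μ`.
-/

namespace LinearMap

variable {R M N : Type*} [CommRing R] [AddCommGroup M] [Module R M] [AddCommGroup N] [Module R N]

theorem trace_prod [Module.Free R M] [Module.Finite R M] [Module.Free R N] [Module.Finite R N]
    (L : Module.End R (M × N)) :
    trace R (M × N) L =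
      trace R M (fst R M N ∘ₗ L ∘ₗ inl R M N) + trace R N (snd R M N ∘ₗ L ∘ₗ inr R M N) := by
  have hL : L = (L ∘ₗ inl R M N) ∘ₗ fst R M N + (L ∘ₗ inr R M N) ∘ₗ snd R M N :=
    LinearMap.ext fun x => by simp [← map_add]
  conv_lhs => rw [hL]
  rw [map_add, trace_comp_comm' (fst R M N), trace_comp_comm' (snd R M N)]

theorem trace_eq_apply_one (f : R →ₗ[R] R) : trace R R f = f 1 := by
  rw [trace_eq_matrix_trace R (Module.Basis.singleton Unit R)]
  simp [Matrix.trace, toMatrix_apply]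

end LinearMap

section CompactSupport

variable {X Y Z : Type*} [TopologicalSpace X] [TopologicalSpace Y] [Zero Z]
  {f : X × Y → Z}

theorem HasCompactSupport.comp_prodMk_right [T1Space Y] (hf : HasCompactSupport f) (y : Y) :
    HasCompactSupport fun x => f (x, y) :=
  hf.comp_isClosedEmbedding <| .of_continuous_injective_isClosedMap (.prodMk_left y)
    (fun _ _ h => (Prod.mk.inj h).1) (isClosedMap_prodMk_right y)

theorem HasCompactSupport.comp_prodMk_left [T1Space X] (hf : HasCompactSupport f) (x : X) :
    HasCompactSupport fun y => f (x, y) :=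
  hf.comp_isClosedEmbedding <| .of_continuous_injective_isClosedMap (.prodMk_right x)
    (fun _ _ h => (Prod.mk.inj h).2) (isClosedMap_prodMk_left x)

end CompactSupport

section HaarIntegral

variable {E F : Type*} [NormedAddCommGroup E] [NormedSpace ℝ E] [FiniteDimensional ℝ E]
  [MeasurableSpace E] [BorelSpace E] (μ : Measure E) [μ.IsAddHaarMeasure]
  [NormedAddCommGroup F] [NormedSpace ℝ F]

theorem integral_fderiv_eq_zero_of_hasCompactSupport {f : E → F} (hf : ContDiff ℝ 1 f)
    (hfc : HasCompactSupport f) : ∫ x, fderiv ℝ f x ∂μ = 0 := by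
  have hf' : Integrable (fderiv ℝ f) μ :=
    (hf.continuous_fderiv one_ne_zero).integrable_of_hasCompactSupport (hfc.fderiv (𝕜 := ℝ))
  ext v
  rw [ContinuousLinearMap.integral_apply hf', zero_apply]
  have := integral_smul_fderiv_eq_neg_fderiv_smul_of_integrable (μ := μ) (v := v)
    (f := fun _ => (1 : ℝ)) (g := f) (by simp) (by simpa using hf'.apply_continuousLinearMap v)
    (by simpa using hf.continuous.integrable_of_hasCompactSupport hfc)
    (fun x _ => differentiableAt_const 1) (fun x _ => hf.differentiable one_ne_zero x)
  simpa using this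

theorem integral_trace_fderiv_eq_zero_of_hasCompactSupport {f : E → E} (hf : ContDiff ℝ 1 f)
    (hfc : HasCompactSupport f) : ∫ x, LinearMap.trace ℝ E (fderiv ℝ f x) ∂μ = 0 := by
  let trace : (E →L[ℝ] E) →L[ℝ] ℝ :=
    LinearMap.toContinuousLinearMap (LinearMap.trace ℝ E ∘ₗ ContinuousLinearMap.coeLM ℝ)
  have hf' : Integrable (fderiv ℝ f) μ :=
    (hf.continuous_fderiv one_ne_zero).integrable_of_hasCompactSupport (hfc.fderiv (𝕜 := ℝ))
  calc ∫ x, LinearMap.trace ℝ E (fderiv ℝ f x) ∂μ = ∫ x, trace (fderiv ℝ f x) ∂μ := rfl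
    _ = trace (∫ x, fderiv ℝ f x ∂μ) := trace.integral_comp_comm hf'
    _ = 0 := by rw [integral_fderiv_eq_zero_of_hasCompactSupport μ hf hfc, map_zero]

end HaarIntegral

section HalfSpace

variable {E : Type*} [NormedAddCommGroup E] [NormedSpace ℝ E] {F : E × ℝ → E × ℝ}

theorem integral_Iic_fderiv_snd_slice (hF : ContDiff ℝ 1 F) (hFc : HasCompactSupport F) (y : E) :
    ∫ t in Iic 0, (fderiv ℝ F (y, t) (0, 1)).2 = (F (y, 0)).2 := by
  have hslice : ContDiff ℝ 1 fun t => (F (y, t)).2 :=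
    (hF.comp (contDiff_const.prodMk contDiff_id)).snd
  have hderiv (t : ℝ) : deriv (fun t => (F (y, t)).2) t = (fderiv ℝ F (y, t) (0, 1)).2 := by
    have hF' := (hF.differentiable one_ne_zero (y, t)).hasFDerivAt
    exact ((ContinuousLinearMap.snd ℝ E ℝ).hasFDerivAt.comp_hasDerivAt t <|
      hF'.comp_hasDerivAt t ((hasDerivAt_const t y).prodMk (hasDerivAt_id t))).deriv
  simp_rw [← hderiv]
  exact HasCompactSupport.integral_Iic_deriv_eq hslice
    ((hFc.comp_prodMk_left y).comp_left (g := Prod.snd) rfl) 0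

variable [FiniteDimensional ℝ E] [MeasurableSpace E] [BorelSpace E] (μ : Measure E)
  [μ.IsAddHaarMeasure]

theorem integral_trace_fderiv_fst_slice_eq_zero (hF : ContDiff ℝ 1 F) (hFc : HasCompactSupport F)
    (t : ℝ) :
    ∫ y, LinearMap.trace ℝ E
      (.fst ℝ E ℝ ∘L fderiv ℝ F (y, t) ∘L .inl ℝ E ℝ : E →L[ℝ] E) ∂μ = 0 := by
  have hslice : ContDiff ℝ 1 fun y => (F (y, t)).1 :=
    (hF.comp (contDiff_id.prodMk contDiff_const)).fst
  have hderiv (y : E) : fderiv ℝ (fun y => (F (y, t)).1) y =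
      .fst ℝ E ℝ ∘L fderiv ℝ F (y, t) ∘L .inl ℝ E ℝ := by
    have hF' := (hF.differentiable one_ne_zero (y, t)).hasFDerivAt
    exact ((ContinuousLinearMap.fst ℝ E ℝ).hasFDerivAt.comp y <|
      hF'.comp y ((hasFDerivAt_id y).prodMk (hasFDerivAt_const t y))).fderiv
  simp_rw [← hderiv]
  exact integral_trace_fderiv_eq_zero_of_hasCompactSupport μ hslice
    ((hFc.comp_prodMk_right t).comp_left (g := Prod.fst) rfl)

theorem integral_halfSpace_trace_fderiv (hF : ContDiff ℝ 1 F) (hFc : HasCompactSupport F) :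
    ∫ x in {p : E × ℝ | p.2 ≤ 0}, LinearMap.trace ℝ (E × ℝ) (fderiv ℝ F x) ∂μ.prod volume =
      ∫ y, (F (y, 0)).2 ∂μ := by
  set tangential : E × ℝ → ℝ := fun x =>
    LinearMap.trace ℝ E (.fst ℝ E ℝ ∘L fderiv ℝ F x ∘L .inl ℝ E ℝ : E →L[ℝ] E)
  set normal : E × ℝ → ℝ := fun x => (fderiv ℝ F x (0, 1)).2
  set ν := μ.prod (volume.restrict (Iic (0 : ℝ))) with hν
  have hrestrict : (μ.prod volume).restrict {p : E × ℝ | p.2 ≤ 0} = ν := by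
    rw [hν, ← Measure.restrict_univ (μ := μ), Measure.prod_restrict, univ_prod,
      Measure.restrict_univ]
    rfl
  have hDF := hF.continuous_fderiv one_ne_zero
  have htangential : Integrable tangential ν := by
    refine hrestrict ▸ Integrable.restrict (Continuous.integrable_of_hasCompactSupport ?_ ?_)
    · exact (LinearMap.continuous_of_finiteDimensional
        (LinearMap.trace ℝ E ∘ₗ ContinuousLinearMap.coeLM ℝ)).comp
        (continuous_const.clm_comp (hDF.clm_comp continuous_const))
    · exact (hFc.fderiv (𝕜 := ℝ)).comp_left (g := fun L : E × ℝ →L[ℝ] E × ℝ =>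
        LinearMap.trace ℝ E (.fst ℝ E ℝ ∘L L ∘L .inl ℝ E ℝ : E →L[ℝ] E)) (by simp)
  have hnormal : Integrable normal ν := by
    refine hrestrict ▸ Integrable.restrict (Continuous.integrable_of_hasCompactSupport ?_ ?_)
    · exact (hDF.clm_apply continuous_const).snd
    · exact (hFc.fderiv (𝕜 := ℝ)).comp_left
        (g := fun L : E × ℝ →L[ℝ] E × ℝ => (L (0, 1)).2) rfl
  have htrace (x : E × ℝ) :
      LinearMap.trace ℝ (E × ℝ) (fderiv ℝ F x) = tangential x + normal x := by
    rw [LinearMap.trace_prod, LinearMap.trace_eq_apply_one]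
    rfl
  calc ∫ x in {p : E × ℝ | p.2 ≤ 0}, LinearMap.trace ℝ (E × ℝ) (fderiv ℝ F x) ∂μ.prod volume
      = ∫ x, tangential x ∂ν + ∫ x, normal x ∂ν := by
        simp_rw [hrestrict, htrace, integral_add htangential hnormal]
    _ = (∫ t in Iic 0, ∫ y, tangential (y, t) ∂μ) + ∫ y, (∫ t in Iic 0, normal (y, t)) ∂μ := by
        rw [integral_prod_symm _ htangential, integral_prod _ hnormal]
    _ = ∫ y, (F (y, 0)).2 ∂μ := by
        simp only [tangential, normal, integral_trace_fderiv_fst_slice_eq_zero μ hF hFc,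
          integral_Iic_fderiv_snd_slice hF hFc, integral_zero, zero_add]

end HalfSpace

theorem ContinuousLinearMap.apply_eq_snd_mul_of_apply_inl_eq_zero {E : Type*}
    [NormedAddCommGroup E] [NormedSpace ℝ E] (n : E × ℝ →L[ℝ] ℝ) (hn : ∀ v, n (v, 0) = 0)
    (p : E × ℝ) : n p = p.2 * n (0, 1) := by
  obtain ⟨v, t⟩ := p
  have hp : ((v, t) : E × ℝ) = (v, 0) + t • (0, 1) := by simp
  conv_lhs => rw [hp, map_add, map_smul, hn, smul_eq_mul, zero_add]

theorem ite_pos_one_neg_one_mul_self (c : ℝ) : (if 0 < c then 1 else -1) * c = |c| := by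
  split_ifs with hc
  · rw [one_mul, abs_of_pos hc]
  · rw [neg_one_mul, abs_of_nonpos (not_lt.mp hc)]

theorem detTuple_snoc_single (Θ : E' × ℝ) :
    detTuple (Fin.snoc (fun i : Fin d => ((EuclideanSpace.single i 1 : E'), (0 : ℝ))) Θ) = Θ.2 := by
  set v : Fin (d + 1) → E' × ℝ := Fin.snoc (fun i => (EuclideanSpace.single i 1, 0)) Θ
  have hminor :
      (Matrix.of fun i j => prodCoord (v j) i).submatrix Fin.castSucc Fin.castSucc = 1 := by
    ext i j
    simp [v, prodCoord, Matrix.one_apply, eq_comm]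
  rw [detTuple, Matrix.det_succ_row _ (Fin.last d), Fin.sum_univ_castSucc, Fin.succAbove_last,
    hminor]
  simp [v, prodCoord]

theorem conormal_sgn_mul_apply_mul_abs_detTuple (n : E' × ℝ →L[ℝ] ℝ) (hn : ∀ v, n (v, 0) = 0)
    {Θ : E' × ℝ} (hΘ : n Θ = 1) (u : E' × ℝ) (r : ℝ) :
    (if 0 < n (0, 1) then 1 else -1) * n u *
      (r * |detTuple (Fin.snoc (fun i : Fin d => ((EuclideanSpace.single i 1 : E'), (0 : ℝ))) Θ)|) =
      r * u.2 := by
  have hnΘ := n.apply_eq_snd_mul_of_apply_inl_eq_zero hn Θ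
  have hunit : Θ.2 * n (0, 1) = 1 := hnΘ ▸ hΘ
  have hc : |n (0, 1)| ≠ 0 :=
    abs_ne_zero.mpr (right_ne_zero_of_mul (hunit.symm ▸ one_ne_zero))
  have hΘ2 : |Θ.2| = |n (0, 1)|⁻¹ := by rw [← abs_inv, eq_inv_of_mul_eq_one_left hunit]
  rw [detTuple_snoc_single, hΘ2, n.apply_eq_snd_mul_of_apply_inl_eq_zero hn u]
  calc (if 0 < n (0, 1) then 1 else -1) * (u.2 * n (0, 1)) * (r * |n (0, 1)|⁻¹)
      = (if 0 < n (0, 1) then 1 else -1) * n (0, 1) * |n (0, 1)|⁻¹ * (r * u.2) := by ring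
    _ = r * u.2 := by rw [ite_pos_one_neg_one_mul_self, mul_inv_cancel₀ hc, one_mul]

theorem divergence_theorem_for_densities_general
    (ρ : EuclideanSpace ℝ (Fin d) × ℝ → ℝ) (hρ : ContDiff ℝ 1 ρ)
    (Υ : EuclideanSpace ℝ (Fin d) × ℝ → EuclideanSpace ℝ (Fin d) × ℝ)
    (hΥ : ContDiff ℝ 1 Υ) (hΥc : HasCompactSupport Υ)
    -- `n` is an arbitrary (not necessarily continuous) field of nonzero conormals
    -- to `∂D = E' × {0}`
    (n : EuclideanSpace ℝ (Fin d) → (EuclideanSpace ℝ (Fin d) × ℝ →L[ℝ] ℝ))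
    (hntan : ∀ (y : EuclideanSpace ℝ (Fin d)) (v : EuclideanSpace ℝ (Fin d)),
      n y (v, (0 : ℝ)) = 0)
    -- a transverse field normalized by `n(Θ) = 1`, used to evaluate `ι_n μ`
    (Θ : EuclideanSpace ℝ (Fin d) → EuclideanSpace ℝ (Fin d) × ℝ)
    (hΘ : ∀ y, n y (Θ y) = 1) :
    -- `∫_D £_Υ μ = ∫_{∂D} sgn_D(n) · n(Υ) · ι_n μ`
    (∫ x in {p : EuclideanSpace ℝ (Fin d) × ℝ | p.2 ≤ 0},
        LinearMap.trace ℝ (EuclideanSpace ℝ (Fin d) × ℝ)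
          (fderiv ℝ (fun z => ρ z • Υ z) x).toLinearMap =
      ∫ y : EuclideanSpace ℝ (Fin d),
        (if 0 < n y ((0 : EuclideanSpace ℝ (Fin d)), (1 : ℝ)) then (1:ℝ) else -1) *
          n y (Υ (y, (0:ℝ))) *
          (ρ (y, (0:ℝ)) *
            |detTuple (Fin.snoc
              (fun i : Fin d => ((EuclideanSpace.single i (1:ℝ) :
                EuclideanSpace ℝ (Fin d)), (0:ℝ))) (Θ y))|)) ∧
    -- and if `μ` is nowhere vanishing, `∫_D (div_μ Υ) μ` equals the same boundary
    -- integral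
    ((∀ x, ρ x ≠ 0) →
      ∫ x in {p : EuclideanSpace ℝ (Fin d) × ℝ | p.2 ≤ 0},
        (LinearMap.trace ℝ (EuclideanSpace ℝ (Fin d) × ℝ)
          (fderiv ℝ (fun z => ρ z • Υ z) x).toLinearMap / ρ x) * ρ x =
      ∫ y : EuclideanSpace ℝ (Fin d),
        (if 0 < n y ((0 : EuclideanSpace ℝ (Fin d)), (1 : ℝ)) then (1:ℝ) else -1) *
          n y (Υ (y, (0:ℝ))) *
          (ρ (y, (0:ℝ)) *
            |detTuple (Fin.snoc
              (fun i : Fin d => ((EuclideanSpace.single i (1:ℝ) :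
                EuclideanSpace ℝ (Fin d)), (0:ℝ))) (Θ y))|)) := by
  have hF : ContDiff ℝ 1 fun z => ρ z • Υ z := hρ.smul hΥ
  have hflux := integral_halfSpace_trace_fderiv volume hF (hΥc.smul_left (f := ρ))
  rw [← Measure.volume_eq_prod] at hflux
  simp only [Prod.smul_snd, smul_eq_mul] at hflux
  have hboundary (y : E') := conormal_sgn_mul_apply_mul_abs_detTuple (n y) (hntan y) (hΘ y)
    (Υ (y, 0)) (ρ (y, 0))
  simp only [hboundary]
  exact ⟨hflux, fun hρ0 => by simpa only [div_mul_cancel₀ _ (hρ0 _)] using hflux⟩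

/-- Divergence theorem for densities on the half-space domain `D = {x | x.2 ≤ 0}`. -/
theorem divergence_theorem_for_densities
    (ρ : EuclideanSpace ℝ (Fin d) × ℝ → ℝ) (hρ : ContDiff ℝ 1 ρ)
    (Υ : EuclideanSpace ℝ (Fin d) × ℝ → EuclideanSpace ℝ (Fin d) × ℝ)
    (hΥ : ContDiff ℝ 1 Υ) (hΥc : HasCompactSupport Υ)
    -- `n` is an arbitrary (not necessarily continuous) field of nonzero conormals
    -- to `∂D = E' × {0}`
    (n : EuclideanSpace ℝ (Fin d) → (EuclideanSpace ℝ (Fin d) × ℝ →L[ℝ] ℝ))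
    (hn0 : ∀ y, n y ≠ 0)
    (hntan : ∀ (y : EuclideanSpace ℝ (Fin d)) (v : EuclideanSpace ℝ (Fin d)),
      n y (v, (0 : ℝ)) = 0)
    -- a transverse field normalized by `n(Θ) = 1`, used to evaluate `ι_n μ`
    (Θ : EuclideanSpace ℝ (Fin d) → EuclideanSpace ℝ (Fin d) × ℝ)
    (hΘ : ∀ y, n y (Θ y) = 1) :
    -- `∫_D £_Υ μ = ∫_{∂D} sgn_D(n) · n(Υ) · ι_n μ`
    (∫ x in {p : EuclideanSpace ℝ (Fin d) × ℝ | p.2 ≤ 0},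
        LinearMap.trace ℝ (EuclideanSpace ℝ (Fin d) × ℝ)
          (fderiv ℝ (fun z => ρ z • Υ z) x).toLinearMap =
      ∫ y : EuclideanSpace ℝ (Fin d),
        (if 0 < n y ((0 : EuclideanSpace ℝ (Fin d)), (1 : ℝ)) then (1:ℝ) else -1) *
          n y (Υ (y, (0:ℝ))) *
          (ρ (y, (0:ℝ)) *
            |detTuple (Fin.snoc
              (fun i : Fin d => ((EuclideanSpace.single i (1:ℝ) :
                EuclideanSpace ℝ (Fin d)), (0:ℝ))) (Θ y))|)) ∧
    -- and if `μ` is nowhere vanishing, `∫_D (div_μ Υ) μ` equals the same boundary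
    -- integral
    ((∀ x, ρ x ≠ 0) →
      ∫ x in {p : EuclideanSpace ℝ (Fin d) × ℝ | p.2 ≤ 0},
        (LinearMap.trace ℝ (EuclideanSpace ℝ (Fin d) × ℝ)
          (fderiv ℝ (fun z => ρ z • Υ z) x).toLinearMap / ρ x) * ρ x =
      ∫ y : EuclideanSpace ℝ (Fin d),
        (if 0 < n y ((0 : EuclideanSpace ℝ (Fin d)), (1 : ℝ)) then (1:ℝ) else -1) *
          n y (Υ (y, (0:ℝ))) *
          (ρ (y, (0:ℝ)) *
            |detTuple (Fin.snoc
              (fun i : Fin d => ((EuclideanSpace.single i (1:ℝ) :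
                EuclideanSpace ℝ (Fin d)), (0:ℝ))) (Θ y))|)) :=
  divergence_theorem_for_densities_general ρ hρ Υ hΥ hΥc n hntan Θ hΘ
end
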